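/- arXiv:2106.05245 — 5 statements merged into one kernel-verified Lean document; each statement's English description precedes it below -/
import Mathlib

section
/- Let G be a finite undirected graph, let L, R ⊆ V_G be disjoint sets with S = L ∪ R satisfying vol(S) > 0, and let H be the double cover of G. Then the conductance of L₁ ∪ R₂ in H equals the bipartiteness ratio of (L, R) in G, i.e. Φ_H(L₁ ∪ R₂) = β_G(L, R). -/
open Finset

namespace Paper

variable {V : Type*} [Fintype V] [DecidableEq V]

/-- The degree of a vertex `v` in the graph `G`. -/
noncomputable def deg (G : SimpleGraph V) (v : V) : ℕ := {u | G.Adj v u}.ncard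

/-- The volume of a set of vertices: the sum of the degrees of its members. -/
noncomputable def vol (G : SimpleGraph V) (S : Finset V) : ℕ := ∑ v ∈ S, deg G v

/-- The number of ordered pairs `(u,v)` with `u ∈ S`, `v ∈ T` and `{u,v} ∈ E(G)`.
For disjoint `S`, `T` this is the number of edges between `S` and `T`, and
`cutEdges G S Sᶜ = |∂(S)|`. -/
noncomputable def cutEdges (G : SimpleGraph V) (S T : Finset V) : ℕ :=
  {e : V × V | e.1 ∈ S ∧ e.2 ∈ T ∧ G.Adj e.1 e.2}.ncard

/-- The conductance `Φ(S) = |∂(S)| / min(vol(S), vol(V \ S))`. -/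
noncomputable def conductance (G : SimpleGraph V) (S : Finset V) : ℝ :=
  (cutEdges G S Sᶜ : ℝ) / min (vol G S : ℝ) (vol G Sᶜ : ℝ)

/-- The bipartiteness ratio `β(L,R) = 1 - 2 e(L,R) / vol(L ∪ R)`. -/
noncomputable def bipartiteness (G : SimpleGraph V) (L R : Finset V) : ℝ :=
  1 - 2 * (cutEdges G L R : ℝ) / (vol G (L ∪ R) : ℝ)

/-- The double cover of `G`: on vertex set `V ⊕ V` (with `Sum.inl v = v₁` and
`Sum.inr v = v₂`), for every edge `{u,v}` of `G` there are edges `{u₁,v₂}` and `{u₂,v₁}`. -/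
def doubleCover (G : SimpleGraph V) : SimpleGraph (V ⊕ V) :=
  SimpleGraph.fromRel (fun x y => ∃ u v, x = Sum.inl u ∧ y = Sum.inr v ∧ G.Adj u v)

open scoped Classical in
/-- One step of the lazy random walk `W = (1/2)(I + D⁻¹A)`, acting on row vectors:
`p ↦ pW`, so `(lazyWalk G p) x = (1/2) p(x) + (1/2) ∑_{y ~ x} p(y)/deg(y)`. -/
noncomputable def lazyWalk (G : SimpleGraph V) (p : V → ℝ) : V → ℝ :=
  fun x => (1/2) * p x + (1/2) * ∑ y, (if G.Adj y x then p y / (deg G y : ℝ) else 0)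

/-- The simplify operator `σ` on vectors indexed by the double cover:
`(σ∘p)(u₁) = max(0, p(u₁) - p(u₂))` and `(σ∘p)(u₂) = max(0, p(u₂) - p(u₁))`. -/
noncomputable def simplify (p : V ⊕ V → ℝ) : V ⊕ V → ℝ :=
  Sum.elim (fun u => max 0 (p (Sum.inl u) - p (Sum.inr u)))
           (fun u => max 0 (p (Sum.inr u) - p (Sum.inl u)))

/-- `q` is the personalised Pagerank vector `pr(α, s)`, i.e. it satisfies
`q = α s + (1-α) q W`. -/
def IsPagerank (G : SimpleGraph V) (α : ℝ) (s q : V → ℝ) : Prop :=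
  ∀ x, q x = α * s x + (1 - α) * lazyWalk G q x

/-- `p` is an approximate Pagerank vector `apr(α, s, r)` with residual `r`, i.e.
`p + pr(α, r) = pr(α, s)`. -/
def IsApr (G : SimpleGraph V) (α : ℝ) (s r p : V → ℝ) : Prop :=
  ∃ qs qr, IsPagerank G α s qs ∧ IsPagerank G α r qr ∧ ∀ x, p x + qr x = qs x

/-- Given an ordering `ord` of the vertices, the sweep set `S_j` consists of the
first `j` vertices in this ordering. -/
def sweepSet {W : Type*} [Fintype W] (ord : Fin (Fintype.card W) ≃ W) (j : ℕ) :
    Finset W :=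
  Finset.univ.filter fun x => (ord.symm x : ℕ) < j

/-- The size of the support `supp(p) = {u : p(u) ≠ 0}` of a vector. -/
noncomputable def suppCard {W : Type*} (p : W → ℝ) : ℕ := {x | p x ≠ 0}.ncard

/-- The Lovász–Simonovits curve of a vector `p`:
`p[x] = max { ∑_u w(u) p(u) : w ∈ [0,1]^V, ∑_u w(u) deg(u) = x }`. -/
noncomputable def lsCurve (G : SimpleGraph V) (p : V → ℝ) (x : ℝ) : ℝ :=
  sSup {y | ∃ w : V → ℝ, (∀ u, 0 ≤ w u ∧ w u ≤ 1) ∧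
    (∑ u, w u * (deg G u : ℝ)) = x ∧ y = ∑ u, w u * p u}

/-! ### Directed graphs -/

/-- Out-degree of `u` in the digraph with edge relation `E`. -/
noncomputable def degOut (E : V → V → Prop) (u : V) : ℕ := {v | E u v}.ncard

/-- In-degree of `u` in the digraph with edge relation `E`. -/
noncomputable def degIn (E : V → V → Prop) (u : V) : ℕ := {v | E v u}.ncard

/-- Out-volume `vol_out(S) = ∑_{u ∈ S} deg_out(u)`. -/
noncomputable def volOut (E : V → V → Prop) (S : Finset V) : ℕ := ∑ u ∈ S, degOut E u

/-- In-volume `vol_in(S) = ∑_{u ∈ S} deg_in(u)`. -/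
noncomputable def volIn (E : V → V → Prop) (S : Finset V) : ℕ := ∑ u ∈ S, degIn E u

/-- The number of directed edges from `L` to `R`. -/
noncomputable def eDir (E : V → V → Prop) (L R : Finset V) : ℕ :=
  {e : V × V | e.1 ∈ L ∧ e.2 ∈ R ∧ E e.1 e.2}.ncard

/-- The total number of directed edges of the digraph. -/
noncomputable def numEdges (E : V → V → Prop) : ℕ := {e : V × V | E e.1 e.2}.ncard

/-- The flow ratio `F(L,R) = 1 - 2 e(L,R) / (vol_out(L) + vol_in(R))`. -/
noncomputable def flowRatio (E : V → V → Prop) (L R : Finset V) : ℝ :=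
  1 - 2 * (eDir E L R : ℝ) / ((volOut E L : ℝ) + (volIn E R : ℝ))

/-- The semi-double cover of a digraph: on vertex set `V ⊕ V` (with `Sum.inl v = v₁`,
`Sum.inr v = v₂`), for every directed edge `(u,v)` there is an undirected edge `{u₁, v₂}`. -/
def semiDoubleCover (E : V → V → Prop) : SimpleGraph (V ⊕ V) :=
  SimpleGraph.fromRel (fun x y => ∃ u v, x = Sum.inl u ∧ y = Sum.inr v ∧ E u v)

/-! ### The evolving set process -/

/-- `χ_v W χ_S^T`: the probability that one step of the lazy random walk started
at `v` ends in `S`. -/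
noncomputable def walkToSet (H : SimpleGraph V) (S : Finset V) (v : V) : ℝ :=
  (1/2) * (if v ∈ S then (1:ℝ) else 0)
    + (1/2) * (({y | H.Adj v y ∧ y ∈ S}.ncard : ℝ) / (deg H v : ℝ))

/-- The transition kernel `K(S, S')` of the evolving set process: the probability,
over a uniformly random threshold `t ∈ [0,1]`, that `{v : χ_v W χ_S^T ≥ t} = S'`. -/
noncomputable def espKernel (H : SimpleGraph V) (S S' : Finset V) : ℝ :=
  (MeasureTheory.volume {t : ℝ | t ∈ Set.Icc (0:ℝ) 1 ∧
    {v | t ≤ walkToSet H S v} = (S' : Set V)}).toReal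

/-- The transition kernel `K̂(S,S') = (vol(S')/vol(S)) K(S,S')` of the volume-biased
evolving set process. -/
noncomputable def vbKernel (H : SimpleGraph V) (S S' : Finset V) : ℝ :=
  ((vol H S' : ℝ) / (vol H S : ℝ)) * espKernel H S S'

open scoped Classical in
/-- The probability that a sample path `(S₀, …, S_T)` of the volume-biased evolving
set process started from `S₀ = {x}` satisfies the property `P`. -/
noncomputable def pathProb (H : SimpleGraph V) (T : ℕ) (x : V)
    (P : (Fin (T+1) → Finset V) → Prop) : ℝ :=
  ∑ f ∈ Finset.univ.filter (fun f : Fin (T+1) → Finset V => f 0 = {x} ∧ P f),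
    ∏ i : Fin T, vbKernel H (f i.castSucc) (f i.succ)

/-! Every vertex of the double cover `H` has the degree of its projection to `G`. Hence
`vol_H(L₁ ∪ R₂) = vol_G(L) + vol_G(R)`, while `vol_H((L₁ ∪ R₂)ᶜ) = vol_G(V ∖ L) + vol_G(V ∖ R)`
is larger because `L` and `R` are disjoint, so the minimum in `Φ_H` is `vol_G(L ∪ R)`. Each edge
between `L` and `R` lifts to two edges inside `L₁ ∪ R₂`, and these are all of them, so counting
edge ends gives `|∂(L₁ ∪ R₂)| = vol_G(L ∪ R) - 2 e(L, R)`. -/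

open scoped Classical

section General

omit [Fintype V] [DecidableEq V]

lemma deg_eq_card_filter [Fintype V] (G : SimpleGraph V) (v : V) :
    deg G v = #{u | G.Adj v u} := by
  rw [deg, ← Set.ncard_coe_finset, coe_filter_univ]

lemma cutEdges_eq_sum_card (G : SimpleGraph V) (S T : Finset V) :
    cutEdges G S T = ∑ u ∈ S, #{v ∈ T | G.Adj u v} := by
  have hset : {e : V × V | e.1 ∈ S ∧ e.2 ∈ T ∧ G.Adj e.1 e.2}
      = ↑((S ×ˢ T).filter fun e => G.Adj e.1 e.2) := by
    ext e; simp [and_assoc]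
  rw [cutEdges, hset, Set.ncard_coe_finset, card_filter, sum_product]
  simp only [← card_filter]

lemma cutEdges_comm (G : SimpleGraph V) (S T : Finset V) :
    cutEdges G S T = cutEdges G T S := by
  simp only [cutEdges_eq_sum_card, card_filter]
  rw [sum_comm]
  simp only [G.adj_comm]

lemma vol_mono (G : SimpleGraph V) {S T : Finset V} (h : S ⊆ T) : vol G S ≤ vol G T :=
  sum_le_sum_of_subset h

lemma vol_union [DecidableEq V] (G : SimpleGraph V) {S T : Finset V} (h : Disjoint S T) :
    vol G (S ∪ T) = vol G S + vol G T :=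
  sum_union h

end General

lemma vol_eq_cutEdges_add_cutEdges_compl (G : SimpleGraph V) (S : Finset V) :
    vol G S = cutEdges G S S + cutEdges G S Sᶜ := by
  rw [vol, cutEdges_eq_sum_card, cutEdges_eq_sum_card, ← sum_add_distrib]
  refine sum_congr rfl fun u _ => ?_
  rw [deg_eq_card_filter, ← card_filter_add_card_filter_not (· ∈ S), filter_filter,
    filter_filter]
  congr 2 <;> ext v <;> simp [and_comm]

section DoubleCover

omit [Fintype V] [DecidableEq V]

variable (G : SimpleGraph V)

@[simp] lemma doubleCover_adj_inl_inl (u v : V) :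
    ¬ (doubleCover G).Adj (Sum.inl u) (Sum.inl v) := by
  simp [doubleCover]

@[simp] lemma doubleCover_adj_inr_inr (u v : V) :
    ¬ (doubleCover G).Adj (Sum.inr u) (Sum.inr v) := by
  simp [doubleCover]

@[simp] lemma doubleCover_adj_inl_inr (u v : V) :
    (doubleCover G).Adj (Sum.inl u) (Sum.inr v) ↔ G.Adj u v := by
  simp [doubleCover]

@[simp] lemma doubleCover_adj_inr_inl (u v : V) :
    (doubleCover G).Adj (Sum.inr u) (Sum.inl v) ↔ G.Adj u v := by
  simp [doubleCover, G.adj_comm]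

lemma deg_doubleCover_inl (v : V) : deg (doubleCover G) (Sum.inl v) = deg G v := by
  have : {y | (doubleCover G).Adj (Sum.inl v) y} = Sum.inr '' {u | G.Adj v u} := by
    ext (y | y) <;> simp
  rw [deg, this, Set.ncard_image_of_injective _ Sum.inr_injective, deg]

lemma deg_doubleCover_inr (v : V) : deg (doubleCover G) (Sum.inr v) = deg G v := by
  have : {y | (doubleCover G).Adj (Sum.inr v) y} = Sum.inl '' {u | G.Adj v u} := by
    ext (y | y) <;> simp
  rw [deg, this, Set.ncard_image_of_injective _ Sum.inl_injective, deg]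

lemma vol_doubleCover_disjSum (A B : Finset V) :
    vol (doubleCover G) (A.disjSum B) = vol G A + vol G B := by
  simp [vol, sum_disjSum, deg_doubleCover_inl, deg_doubleCover_inr]

lemma cutEdges_doubleCover_disjSum (A B C D : Finset V) :
    cutEdges (doubleCover G) (A.disjSum B) (C.disjSum D)
      = cutEdges G A D + cutEdges G B C := by
  simp only [cutEdges_eq_sum_card, card_filter, sum_disjSum]
  simp

end DoubleCover

omit [Fintype V] [DecidableEq V] in
lemma compl_disjSum {α β : Type*} [Fintype α] [Fintype β] [DecidableEq α] [DecidableEq β]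
    (A : Finset α) (B : Finset β) : (A.disjSum B)ᶜ = Aᶜ.disjSum Bᶜ := by
  ext (x | x) <;> simp

lemma vol_doubleCover_disjSum_le_compl (G : SimpleGraph V) {L R : Finset V}
    (hLR : Disjoint L R) :
    vol (doubleCover G) (L.disjSum R) ≤ vol (doubleCover G) (L.disjSum R)ᶜ := by
  rw [compl_disjSum, vol_doubleCover_disjSum, vol_doubleCover_disjSum, add_comm (vol G Lᶜ)]
  exact add_le_add (vol_mono G (subset_compl_iff_disjoint_right.2 hLR))
    (vol_mono G (subset_compl_iff_disjoint_right.2 hLR.symm))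

/-- For a finite undirected graph `G`, disjoint `L, R ⊆ V_G` with
`vol(L ∪ R) > 0`, and `H` the double cover of `G`:
`Φ_H(L₁ ∪ R₂) = β_G(L, R)`. -/
theorem statement0 (G : SimpleGraph V) (L R : Finset V) (hLR : Disjoint L R)
    (hvol : 0 < vol G (L ∪ R)) :
    conductance (doubleCover G) (L.image Sum.inl ∪ R.image Sum.inr)
      = bipartiteness G L R := by
  have hS : L.image Sum.inl ∪ R.image Sum.inr = L.disjSum R := by
    ext (x | x) <;> simp
  have hvolS : vol (doubleCover G) (L.disjSum R) = vol G (L ∪ R) := by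
    rw [vol_doubleCover_disjSum, vol_union G hLR]
  have hcut : vol G (L ∪ R)
      = 2 * cutEdges G L R + cutEdges (doubleCover G) (L.disjSum R) (L.disjSum R)ᶜ := by
    rw [← hvolS, vol_eq_cutEdges_add_cutEdges_compl, cutEdges_doubleCover_disjSum,
      cutEdges_comm G R L, two_mul]
  have hmin := vol_doubleCover_disjSum_le_compl G hLR
  rw [conductance, bipartiteness, hS, min_eq_left (by exact_mod_cast hmin), hvolS]
  have hvol' : (vol G (L ∪ R) : ℝ) ≠ 0 := by exact_mod_cast hvol.ne'
  field_simp
  rw [hcut]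
  push_cast
  ring

end Paper
end

section
/- Let G be a finite undirected graph with n vertices in which every vertex has positive degree, let H be its double cover with lazy random walk matrix W, and let σ be the simplify operator. Then for every nonnegative vector p ∈ ℝ_{≥0}^{2n}, it holds that σ∘(pW) ⪯ (σ∘p)W. -/
open Finset

namespace Paper

variable {V : Type*} [Fintype V] [DecidableEq V]

/-! The simplify operator is the positive part of `p - p ∘ Sum.swap`. Exchanging the two copies
of every vertex is an automorphism of the double cover, so the lazy walk commutes with it, and by
linearity `(pW)(x) - (pW)(x.swap) = ((p - p ∘ Sum.swap) W)(x)`. The lazy walk has nonnegative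
entries, hence is monotone, and `0 ⪯ σ∘p`, `p - p ∘ Sum.swap ⪯ σ∘p` give the claim. -/

section LazyWalk

variable {X Y : Type*}

theorem deg_iso_apply {H : SimpleGraph X} {H' : SimpleGraph Y} (φ : H ≃g H') (x : X) :
    deg H' (φ x) = deg H x := by
  rw [deg, deg, ← Set.ncard_preimage_of_injective_subset_range φ.injective
    (by simp [φ.surjective.range_eq])]
  congr 1
  ext y
  exact φ.map_adj_iff

variable [Fintype X] [Fintype Y]

theorem lazyWalk_comp_iso {H : SimpleGraph X} {H' : SimpleGraph Y} (φ : H ≃g H')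
    (p : Y → ℝ) (x : X) : lazyWalk H (p ∘ φ) x = lazyWalk H' p (φ x) := by
  simp only [lazyWalk, Function.comp_apply]
  congr 2
  rw [← φ.toEquiv.sum_comp]
  refine Finset.sum_congr rfl fun y _ => ?_
  rw [RelIso.coe_fn_toEquiv, deg_iso_apply]
  congr 1
  exact propext φ.map_adj_iff.symm

open scoped Classical in
theorem lazyWalk_sub (H : SimpleGraph X) (p q : X → ℝ) :
    lazyWalk H (p - q) = lazyWalk H p - lazyWalk H q := by
  ext x
  have hsum : ∀ y, (if H.Adj y x then (p y - q y) / (deg H y : ℝ) else 0)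
      = (if H.Adj y x then p y / (deg H y : ℝ) else 0)
        - (if H.Adj y x then q y / (deg H y : ℝ) else 0) := by
    intro y
    split_ifs <;> ring
  simp only [lazyWalk, Pi.sub_apply, hsum, Finset.sum_sub_distrib]
  ring

theorem lazyWalk_mono (H : SimpleGraph X) {p q : X → ℝ} (hpq : p ≤ q) :
    lazyWalk H p ≤ lazyWalk H q := by
  intro x
  unfold lazyWalk
  gcongr with y
  · exact hpq x
  · split_ifs
    · gcongr
      exact hpq y
    · rfl

theorem lazyWalk_zero (H : SimpleGraph X) : lazyWalk H 0 = 0 := by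
  ext x
  simp [lazyWalk]

theorem lazyWalk_nonneg (H : SimpleGraph X) {p : X → ℝ} (hp : 0 ≤ p) : 0 ≤ lazyWalk H p :=
  lazyWalk_zero H ▸ lazyWalk_mono H hp

end LazyWalk

def doubleCoverSwap (G : SimpleGraph V) : doubleCover G ≃g doubleCover G where
  toEquiv := Equiv.sumComm V V
  map_rel_iff' := by
    rintro (u | u) (v | v) <;> simp [doubleCover, G.adj_comm]

theorem simplify_apply {X : Type*} (p : X ⊕ X → ℝ) (x : X ⊕ X) :
    simplify p x = max 0 (p x - p x.swap) := by
  cases x <;> rfl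

theorem statement4_general (G : SimpleGraph V) (p : V ⊕ V → ℝ) :
    ∀ x, simplify (lazyWalk (doubleCover G) p) x
      ≤ lazyWalk (doubleCover G) (simplify p) x := by
  intro x
  have hdiff : lazyWalk (doubleCover G) p x - lazyWalk (doubleCover G) p x.swap
      = lazyWalk (doubleCover G) (p - p ∘ Sum.swap) x := by
    rw [lazyWalk_sub, Pi.sub_apply]
    exact congrArg _ (lazyWalk_comp_iso (doubleCoverSwap G) p x).symm
  have hnonneg : 0 ≤ simplify p := fun y => by
    rw [Pi.zero_apply, simplify_apply]
    exact le_max_left _ _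
  have hle : p - p ∘ Sum.swap ≤ simplify p := fun y => by
    rw [simplify_apply]
    exact le_max_right _ _
  rw [simplify_apply, hdiff]
  exact max_le (lazyWalk_nonneg _ hnonneg x) (lazyWalk_mono _ hle x)

/-- Let `G` be a graph in which every vertex has positive degree,
`H` its double cover with lazy random walk matrix `W`, and `σ` the simplify operator.
For every nonnegative vector `p`: `σ∘(pW) ⪯ (σ∘p)W` (pointwise). -/
theorem statement4 (G : SimpleGraph V) (hdeg : ∀ v, 0 < deg G v)
    (p : V ⊕ V → ℝ) (hp : ∀ x, 0 ≤ p x) :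
    ∀ x, simplify (lazyWalk (doubleCover G) p) x
      ≤ lazyWalk (doubleCover G) (simplify p) x :=
  statement4_general G p

end Paper
end

section
/- Let G be a finite directed graph with semi-double cover H. Let L, R ⊆ V_G be sets with 0 < vol_out(L) + vol_in(R) ≤ |E_G|. Then the flow ratio from L to R in G equals the conductance of L₁ ∪ R₂ in H, i.e. F_G(L, R) = Φ_H(L₁ ∪ R₂). -/
open Finset

/-!
Every edge of the semi-double cover `H` joins some `u₁` to some `v₂`, so `deg_H(u₁) = deg_out(u)`
and `deg_H(v₂) = deg_in(v)`. Hence `vol_H(L₁ ∪ R₂) = vol_out(L) + vol_in(R) ≤ |E_G| = vol_H(V_H)/2`,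
so the minimum in `Φ_H(L₁ ∪ R₂)` is `vol_H(L₁ ∪ R₂)`, and `|∂(L₁ ∪ R₂)|` is this volume minus the
edges of `H` inside `L₁ ∪ R₂`, which correspond exactly to the directed edges from `L` to `R`.
-/

namespace Paper

variable {V : Type*}

open scoped Classical in
theorem ncard_setOf_eq_card_filter {α : Type*} [Fintype α] (p : α → Prop) :
    {x | p x}.ncard = (univ.filter p).card := by
  rw [← coe_filter_univ, Set.ncard_coe_finset]

theorem ncard_setOf_fst_mem_eq_sum [Fintype V] (S : Finset V) (P : V → V → Prop) :
    {e : V × V | e.1 ∈ S ∧ P e.1 e.2}.ncard = ∑ x ∈ S, {y | P x y}.ncard := by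
  classical
  have h : {e : V × V | e.1 ∈ S ∧ P e.1 e.2} = ↑((S ×ˢ univ).filter fun e => P e.1 e.2) := by
    ext; simp
  rw [h, Set.ncard_coe_finset, card_filter, sum_product]
  simp_rw [← card_filter, ncard_setOf_eq_card_filter]

section SimpleGraph

variable [Fintype V] (G : SimpleGraph V)

theorem cutEdges_eq_sum (S T : Finset V) :
    cutEdges G S T = ∑ x ∈ S, {y | y ∈ T ∧ G.Adj x y}.ncard := by
  rw [cutEdges, ← ncard_setOf_fst_mem_eq_sum]

variable [DecidableEq V]

theorem cutEdges_compl_add_cutEdges_self (S : Finset V) :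
    cutEdges G S Sᶜ + cutEdges G S S = vol G S := by
  classical
  simp_rw [cutEdges_eq_sum, vol, deg, ← sum_add_distrib, ncard_setOf_eq_card_filter]
  refine sum_congr rfl fun x _ => ?_
  rw [add_comm, ← card_filter_add_card_filter_not (s := {y | G.Adj x y}) (p := (· ∈ S))]
  simp only [filter_filter, mem_compl, and_comm]
  -- the two sides differ only in their `Decidable` instances
  congr

theorem vol_add_vol_compl (S : Finset V) : vol G S + vol G Sᶜ = vol G univ :=
  sum_add_sum_compl S _

theorem conductance_eq_one_sub_of_vol_le (S : Finset V) (hpos : 0 < vol G S)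
    (hle : vol G S ≤ vol G Sᶜ) :
    conductance G S = 1 - cutEdges G S S / vol G S := by
  have hsplit : (cutEdges G S Sᶜ : ℝ) = vol G S - cutEdges G S S := by
    rw [← cutEdges_compl_add_cutEdges_self]; push_cast; ring
  rw [conductance, min_eq_left (by exact_mod_cast hle), hsplit, sub_div,
    div_self (by positivity)]

end SimpleGraph

section Digraph

variable (E : V → V → Prop)

theorem numEdges_flip : numEdges (flip E) = numEdges E := by
  rw [numEdges, numEdges, ← Set.ncard_image_of_injective _ Prod.swap_injective,
    Set.image_swap_eq_preimage_swap]
  rfl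

theorem volOut_univ [Fintype V] : volOut E univ = numEdges E := by
  simp [numEdges, volOut, degOut, ← ncard_setOf_fst_mem_eq_sum]

theorem volIn_univ [Fintype V] : volIn E univ = numEdges E := by
  rw [← numEdges_flip, ← volOut_univ]
  rfl

@[simp]
theorem semiDoubleCover_adj_inl_inr (u v : V) :
    (semiDoubleCover E).Adj (Sum.inl u) (Sum.inr v) ↔ E u v := by
  simp [semiDoubleCover]

@[simp]
theorem semiDoubleCover_adj_inr_inl (u v : V) :
    (semiDoubleCover E).Adj (Sum.inr v) (Sum.inl u) ↔ E u v := by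
  simp [semiDoubleCover]

@[simp]
theorem semiDoubleCover_not_adj_inl_inl (u v : V) :
    ¬ (semiDoubleCover E).Adj (Sum.inl u) (Sum.inl v) := by
  simp [semiDoubleCover]

@[simp]
theorem semiDoubleCover_not_adj_inr_inr (u v : V) :
    ¬ (semiDoubleCover E).Adj (Sum.inr u) (Sum.inr v) := by
  simp [semiDoubleCover]

theorem deg_semiDoubleCover_inl (u : V) :
    deg (semiDoubleCover E) (Sum.inl u) = degOut E u := by
  have h : {y | (semiDoubleCover E).Adj (Sum.inl u) y} = Sum.inr '' {v | E u v} := by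
    ext (y | y) <;> simp
  rw [deg, h, Set.ncard_image_of_injective _ Sum.inr_injective, degOut]

theorem deg_semiDoubleCover_inr (v : V) :
    deg (semiDoubleCover E) (Sum.inr v) = degIn E v := by
  have h : {y | (semiDoubleCover E).Adj (Sum.inr v) y} = Sum.inl '' {u | E u v} := by
    ext (y | y) <;> simp
  rw [deg, h, Set.ncard_image_of_injective _ Sum.inl_injective, degIn]

theorem vol_semiDoubleCover_univ [Fintype V] :
    vol (semiDoubleCover E) univ = 2 * numEdges E := by
  rw [vol, Fintype.sum_sum_type]
  simp only [deg_semiDoubleCover_inl, deg_semiDoubleCover_inr]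
  rw [← volOut, ← volIn, volOut_univ, volIn_univ, two_mul]

variable [DecidableEq V] (L R : Finset V)

theorem vol_semiDoubleCover_inl_union_inr :
    vol (semiDoubleCover E) (L.image Sum.inl ∪ R.image Sum.inr) = volOut E L + volIn E R := by
  rw [vol, sum_union (by simp [disjoint_left]), sum_image (by simp), sum_image (by simp)]
  simp only [deg_semiDoubleCover_inl, deg_semiDoubleCover_inr, volOut, volIn]

theorem cutEdges_semiDoubleCover_inl_union_inr [Fintype V] :
    cutEdges (semiDoubleCover E) (L.image Sum.inl ∪ R.image Sum.inr)
      (L.image Sum.inl ∪ R.image Sum.inr) = 2 * eDir E L R := by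
  set D : Set (V × V) := {e | e.1 ∈ L ∧ e.2 ∈ R ∧ E e.1 e.2}
  set f : V × V → (V ⊕ V) × (V ⊕ V) := Prod.map Sum.inl Sum.inr
  have hf : Function.Injective f := Sum.inl_injective.prodMap Sum.inr_injective
  -- each directed edge `(u,v)` from `L` to `R` is counted as `(u₁,v₂)` and as `(v₂,u₁)`
  have hsplit : {e : (V ⊕ V) × (V ⊕ V) | e.1 ∈ L.image Sum.inl ∪ R.image Sum.inr ∧
      e.2 ∈ L.image Sum.inl ∪ R.image Sum.inr ∧ (semiDoubleCover E).Adj e.1 e.2}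
        = f '' D ∪ (Prod.swap ∘ f) '' D := by
    ext ⟨x | x, y | y⟩ <;> simp [f, D]; tauto
  have hdisj : Disjoint (f '' D) ((Prod.swap ∘ f) '' D) := by
    rw [Set.disjoint_left]
    rintro _ ⟨p, -, rfl⟩ ⟨q, -, hq⟩
    simp [f, Prod.ext_iff] at hq
  rw [cutEdges, hsplit, Set.ncard_union_eq hdisj, Set.ncard_image_of_injective _ hf,
    Set.ncard_image_of_injective _ (Prod.swap_injective.comp hf), eDir, two_mul]

end Digraph

variable [Fintype V] [DecidableEq V]

/-- Let `G` be a finite digraph (edge relation `E`) with semi-double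
cover `H`, and `L, R ⊆ V_G` with `0 < vol_out(L) + vol_in(R) ≤ |E_G|`. Then
`F_G(L,R) = Φ_H(L₁ ∪ R₂)`. -/
theorem statement8 (E : V → V → Prop) (L R : Finset V)
    (h0 : 0 < volOut E L + volIn E R)
    (h1 : volOut E L + volIn E R ≤ numEdges E) :
    flowRatio E L R
      = conductance (semiDoubleCover E) (L.image Sum.inl ∪ R.image Sum.inr) := by
  set S := L.image Sum.inl ∪ R.image Sum.inr
  have hvol : vol (semiDoubleCover E) S = volOut E L + volIn E R :=
    vol_semiDoubleCover_inl_union_inr E L R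
  have hle : vol (semiDoubleCover E) S ≤ vol (semiDoubleCover E) Sᶜ := by
    have := vol_add_vol_compl (semiDoubleCover E) S
    rw [vol_semiDoubleCover_univ] at this
    omega
  rw [conductance_eq_one_sub_of_vol_le _ S (hvol ▸ h0) hle,
    cutEdges_semiDoubleCover_inl_union_inr, hvol, flowRatio]
  push_cast
  ring

end Paper
end

section
/- Let H be a finite undirected graph in which every vertex has positive degree, with lazy random walk matrix W, and let α ∈ (0,1]. For row vectors p, r on V_H and any vertex w ∈ V_H, define p' = p + α·r(w)·χ_w and r' = r − r(w)·χ_w + (1 − α)·r(w)·χ_w W. Then p' + pr(α, r') = p + pr(α, r). (In particular, the dcpush operation preserves the approximate-Pagerank invariant: if p + pr(α, r) = pr(α, χ_{v₁}) before a push, the same holds after the push.) -/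
open Finset

/-! Pushing at `w` settles the mass `α r(w)` into `p` and spreads the rest `(1-α) r(w) χ_w` by one
lazy walk step. Since `pr(α, χ_w) = α χ_w + (1-α) pr(α, χ_w W)`, linearity gives
`pr(α, r') = pr(α, r) - α r(w) χ_w`. Without presupposing that Pagerank vectors exist, one checks
that `pr(α, r) - α r(w) χ_w` solves the Pagerank equation for `r'` and concludes by uniqueness:
the difference of two solutions is a fixed point of `(1-α) W`, and `W` does not increase the
`ℓ¹` norm. -/

namespace Paper

variable {V : Type*} [Fintype V]

noncomputable def lazyWalkₗ (G : SimpleGraph V) : (V → ℝ) →ₗ[ℝ] V → ℝ where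
  toFun := lazyWalk G
  map_add' p q := by
    ext x
    simp only [lazyWalk, Pi.add_apply, add_div, ite_add_zero, sum_add_distrib]
    ring
  map_smul' c p := by
    ext x
    simp only [lazyWalk, Pi.smul_apply, smul_eq_mul, RingHom.id_apply, mul_div_assoc,
      ← mul_ite_zero, ← mul_sum]
    ring

@[simp]
lemma lazyWalkₗ_apply (G : SimpleGraph V) (p : V → ℝ) : lazyWalkₗ G p = lazyWalk G p := rfl

open scoped Classical in
lemma deg_eq_card_filter_adj (G : SimpleGraph V) (y : V) :
    deg G y = #{u | G.Adj y u} := by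
  rw [deg, Set.ncard_eq_toFinset_card']
  congr 1
  ext u
  simp

open scoped Classical in
lemma sum_abs_lazyWalk_le (G : SimpleGraph V) (q : V → ℝ) :
    ∑ x, |lazyWalk G q x| ≤ ∑ x, |q x| := by
  have hpoint : ∀ x, |lazyWalk G q x| ≤
      1 / 2 * |q x| + 1 / 2 * ∑ y, (if G.Adj y x then |q y| / (deg G y : ℝ) else 0) := by
    intro x
    refine (abs_add_le _ _).trans ?_
    rw [abs_mul, abs_mul, abs_of_pos (by norm_num : (0 : ℝ) < 1 / 2)]
    gcongr
    refine (abs_sum_le_sum_abs _ _).trans_eq (sum_congr rfl fun y _ => ?_)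
    split_ifs <;> simp [abs_div]
  have hspread : ∀ y, ∑ x, (if G.Adj y x then |q y| / (deg G y : ℝ) else 0) ≤ |q y| := by
    intro y
    rw [← sum_filter, sum_const, nsmul_eq_mul, ← deg_eq_card_filter_adj]
    rcases (Nat.zero_le (deg G y)).eq_or_lt with h | h
    · simp [← h]
    · rw [mul_div_cancel₀ _ (by positivity)]
  calc ∑ x, |lazyWalk G q x|
      ≤ ∑ x, (1 / 2 * |q x| + 1 / 2 * ∑ y, (if G.Adj y x then |q y| / (deg G y : ℝ) else 0)) :=
        sum_le_sum fun x _ => hpoint x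
    _ = 1 / 2 * ∑ x, |q x|
        + 1 / 2 * ∑ y, ∑ x, (if G.Adj y x then |q y| / (deg G y : ℝ) else 0) := by
        rw [sum_add_distrib, ← mul_sum, ← mul_sum, sum_comm]
    _ ≤ 1 / 2 * ∑ x, |q x| + 1 / 2 * ∑ y, |q y| := by gcongr with y; exact hspread y
    _ = ∑ x, |q x| := by ring

lemma eq_zero_of_eq_mul_lazyWalk (G : SimpleGraph V) {c : ℝ} (hc : |c| < 1) {d : V → ℝ}
    (hd : ∀ x, d x = c * lazyWalk G d x) : d = 0 := by
  have hle : ∑ x, |d x| ≤ |c| * ∑ x, |d x| :=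
    calc ∑ x, |d x| = |c| * ∑ x, |lazyWalk G d x| := by
          simp only [mul_sum, ← abs_mul, ← hd]
      _ ≤ |c| * ∑ x, |d x| := by gcongr ?_ * ?_; exact sum_abs_lazyWalk_le G d
  have hsum : ∑ x, |d x| = 0 := by
    nlinarith [sum_nonneg fun x (_ : x ∈ univ) => abs_nonneg (d x)]
  ext x
  simpa using (sum_eq_zero_iff_of_nonneg fun x _ => abs_nonneg (d x)).1 hsum x (mem_univ x)

lemma IsPagerank.unique {G : SimpleGraph V} {α : ℝ} (hα0 : 0 < α) (hα1 : α ≤ 1)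
    {s q₁ q₂ : V → ℝ} (h₁ : IsPagerank G α s q₁) (h₂ : IsPagerank G α s q₂) : q₁ = q₂ := by
  have hW : lazyWalk G (q₁ - q₂) = lazyWalk G q₁ - lazyWalk G q₂ := map_sub (lazyWalkₗ G) q₁ q₂
  have hfix : ∀ x, (q₁ - q₂) x = (1 - α) * lazyWalk G (q₁ - q₂) x := by
    intro x
    simp only [hW, Pi.sub_apply]
    linear_combination h₁ x - h₂ x
  have hc : |1 - α| < 1 := abs_lt.2 ⟨by linarith, by linarith⟩
  exact sub_eq_zero.1 (eq_zero_of_eq_mul_lazyWalk G hc hfix)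

variable [DecidableEq V]

lemma IsPagerank.push {G : SimpleGraph V} {α : ℝ} {r q : V → ℝ} (h : IsPagerank G α r q)
    (w : V) :
    IsPagerank G α
      (fun x => r x - r w * (if x = w then (1:ℝ) else 0)
        + (1 - α) * r w * lazyWalk G (fun y => if y = w then (1:ℝ) else 0) x)
      (fun x => q x - α * r w * (if x = w then (1:ℝ) else 0)) := by
  set χ : V → ℝ := fun y => if y = w then 1 else 0
  have hW : lazyWalk G (q - (α * r w) • χ) = lazyWalk G q - (α * r w) • lazyWalk G χ := by
    simp only [← lazyWalkₗ_apply, map_sub, map_smul]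
  intro x
  have hWx := congrFun hW x
  simp only [Pi.sub_apply, Pi.smul_apply, smul_eq_mul] at hWx ⊢
  linear_combination h x - (1 - α) * hWx

theorem statement10_general (H : SimpleGraph V)
    (α : ℝ) (hα0 : 0 < α) (hα1 : α ≤ 1)
    (p r : V → ℝ) (w : V) (p' r' : V → ℝ)
    (hp' : p' = fun x => p x + α * r w * (if x = w then (1:ℝ) else 0))
    (hr' : r' = fun x => r x - r w * (if x = w then (1:ℝ) else 0)
        + (1 - α) * r w * lazyWalk H (fun y => if y = w then (1:ℝ) else 0) x)
    (qr qr' : V → ℝ)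
    (hqr : IsPagerank H α r qr) (hqr' : IsPagerank H α r' qr') :
    ∀ x, p' x + qr' x = p x + qr x := by
  subst hp' hr'
  have hqr'_eq := (hqr.push w).unique hα0 hα1 hqr'
  intro x
  rw [← hqr'_eq]
  ring

/-- Let `H` be a finite undirected graph with positive degrees
everywhere, with lazy random walk matrix `W`, and `α ∈ (0,1]`. For row vectors
`p, r` and a vertex `w`, set `p' = p + α r(w) χ_w` and
`r' = r - r(w) χ_w + (1-α) r(w) χ_w W`. Then `p' + pr(α, r') = p + pr(α, r)`
(expressed via the defining equation of the personalised Pagerank vectors). -/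
theorem statement10 (H : SimpleGraph V) (hdeg : ∀ v, 0 < deg H v)
    (α : ℝ) (hα0 : 0 < α) (hα1 : α ≤ 1)
    (p r : V → ℝ) (w : V) (p' r' : V → ℝ)
    (hp' : p' = fun x => p x + α * r w * (if x = w then (1:ℝ) else 0))
    (hr' : r' = fun x => r x - r w * (if x = w then (1:ℝ) else 0)
        + (1 - α) * r w * lazyWalk H (fun y => if y = w then (1:ℝ) else 0) x)
    (qr qr' : V → ℝ)
    (hqr : IsPagerank H α r qr) (hqr' : IsPagerank H α r' qr') :
    ∀ x, p' x + qr' x = p x + qr x :=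
  statement10_general H α hα0 hα1 p r w p' r' hp' hr' qr qr' hqr hqr'

end Paper
end

section
/- Let G be a finite directed graph with semi-double cover H. Let ε ∈ [0,1), let S ⊆ V_H be an ε-simple set with vol(S) ≤ vol(V_H)/2, let P = {u₁, u₂ : u ∈ V_G, u₁ ∈ S and u₂ ∈ S}, and set S' = S ∖ P, assuming vol(S') > 0. Then Φ_H(S') ≤ (1/(1 − ε))·(Φ_H(S) + ε). -/
open Finset

namespace Paper

variable {V : Type*} [Fintype V] [DecidableEq V]

/-! Every boundary edge of `S ∖ P` is a boundary edge of `S` or ends in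
`P`, so `|∂(S ∖ P)| ≤ |∂S| + vol P ≤ |∂S| + ε vol S`, while `vol (S ∖ P) ≥ (1 - ε) vol S`.
Both sets have at most half the total volume, so their conductances are `|∂|/vol`. -/

omit [DecidableEq V] in
theorem cutEdges_le_vol_right (H : SimpleGraph V) (A B : Finset V) :
    cutEdges H A B ≤ vol H B := by
  have hsub : {e : V × V | e.1 ∈ A ∧ e.2 ∈ B ∧ H.Adj e.1 e.2} ⊆
      ⋃ y ∈ B, (fun u => (u, y)) '' {u | H.Adj y u} := by
    rintro ⟨u, y⟩ ⟨-, hy, hadj⟩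
    exact Set.mem_biUnion hy ⟨u, hadj.symm, rfl⟩
  calc cutEdges H A B ≤ (⋃ y ∈ B, (fun u => (u, y)) '' {u | H.Adj y u}).ncard :=
        Set.ncard_le_ncard hsub (Set.toFinite _)
    _ ≤ ∑ y ∈ B, ((fun u => (u, y)) '' {u | H.Adj y u}).ncard := B.set_ncard_biUnion_le _
    _ ≤ vol H B := Finset.sum_le_sum fun y _ => Set.ncard_image_le

theorem cutEdges_sdiff_le (H : SimpleGraph V) (S P : Finset V) :
    cutEdges H (S \ P) (S \ P)ᶜ ≤ cutEdges H S Sᶜ + vol H P := by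
  have hsub : {e : V × V | e.1 ∈ S \ P ∧ e.2 ∈ (S \ P)ᶜ ∧ H.Adj e.1 e.2} ⊆
      {e : V × V | e.1 ∈ S ∧ e.2 ∈ Sᶜ ∧ H.Adj e.1 e.2} ∪
      {e : V × V | e.1 ∈ S \ P ∧ e.2 ∈ P ∧ H.Adj e.1 e.2} := by
    rintro ⟨u, v⟩ ⟨hu, hv, hadj⟩
    by_cases hvP : v ∈ P
    · exact Or.inr ⟨hu, hvP, hadj⟩
    · exact Or.inl ⟨(mem_sdiff.mp hu).1,
        mem_compl.mpr fun hvS => mem_compl.mp hv (mem_sdiff.mpr ⟨hvS, hvP⟩), hadj⟩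
  calc cutEdges H (S \ P) (S \ P)ᶜ
      ≤ cutEdges H S Sᶜ + cutEdges H (S \ P) P :=
        (Set.ncard_le_ncard hsub (Set.toFinite _)).trans (Set.ncard_union_le _ _)
    _ ≤ cutEdges H S Sᶜ + vol H P := Nat.add_le_add_left (cutEdges_le_vol_right H _ P) _

theorem conductance_eq_of_two_mul_vol_le (H : SimpleGraph V) {S : Finset V}
    (h : 2 * vol H S ≤ vol H univ) :
    conductance H S = cutEdges H S Sᶜ / vol H S := by
  have hcompl : vol H S + vol H Sᶜ = vol H univ := sum_add_sum_compl S _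
  rw [conductance, min_eq_left (by exact_mod_cast (by omega : vol H S ≤ vol H Sᶜ))]

theorem conductance_sdiff_le (H : SimpleGraph V) {ε : ℝ} (hε1 : ε < 1) {S P : Finset V}
    (hPS : P ⊆ S) (hsimple : (vol H P : ℝ) ≤ ε * vol H S)
    (hhalf : 2 * vol H S ≤ vol H univ) (hpos : 0 < vol H (S \ P)) :
    conductance H (S \ P) ≤ 1 / (1 - ε) * (conductance H S + ε) := by
  have hsplit : vol H (S \ P) + vol H P = vol H S := sum_sdiff hPS
  rw [conductance_eq_of_two_mul_vol_le H hhalf,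
    conductance_eq_of_two_mul_vol_le H (by omega)]
  have hsplitR : (vol H (S \ P) : ℝ) + vol H P = vol H S := by exact_mod_cast hsplit
  have hposR : (0 : ℝ) < vol H (S \ P) := by exact_mod_cast hpos
  have hcut : (cutEdges H (S \ P) (S \ P)ᶜ : ℝ) ≤ cutEdges H S Sᶜ + ε * vol H S := by
    have hcutP : (cutEdges H (S \ P) (S \ P)ᶜ : ℝ) ≤ cutEdges H S Sᶜ + vol H P := by
      exact_mod_cast cutEdges_sdiff_le H S P
    linarith
  have hvol : (1 - ε) * vol H S ≤ vol H (S \ P) := by linarith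
  have hvolS : (0 : ℝ) < vol H S := by linarith [(vol H P).cast_nonneg (α := ℝ)]
  have hε1' : 0 < 1 - ε := by linarith
  calc (cutEdges H (S \ P) (S \ P)ᶜ : ℝ) / vol H (S \ P)
      ≤ (cutEdges H S Sᶜ + ε * vol H S) / vol H (S \ P) :=
        div_le_div_of_nonneg_right hcut hposR.le
    _ ≤ (cutEdges H S Sᶜ + ε * vol H S) / ((1 - ε) * vol H S) :=
        div_le_div_of_nonneg_left ((Nat.cast_nonneg _).trans hcut) (by positivity) hvol
    _ = 1 / (1 - ε) * (cutEdges H S Sᶜ / vol H S + ε) := by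
        field_simp [hvolS.ne', hε1'.ne']

theorem statement14_general (E : V → V → Prop) (ε : ℝ) (hε1 : ε < 1)
    (S P : Finset (V ⊕ V))
    (hP : P = ((Finset.univ.filter fun u : V =>
                  Sum.inl u ∈ S ∧ Sum.inr u ∈ S).image Sum.inl)
            ∪ ((Finset.univ.filter fun u : V =>
                  Sum.inl u ∈ S ∧ Sum.inr u ∈ S).image Sum.inr))
    (hεsimple : (vol (semiDoubleCover E) P : ℝ) ≤ ε * (vol (semiDoubleCover E) S : ℝ))
    (hhalf : 2 * vol (semiDoubleCover E) S ≤ vol (semiDoubleCover E) Finset.univ)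
    (hS' : 0 < vol (semiDoubleCover E) (S \ P)) :
    conductance (semiDoubleCover E) (S \ P)
      ≤ (1 / (1 - ε)) * (conductance (semiDoubleCover E) S + ε) := by
  have hPS : P ⊆ S := by
    subst hP
    rintro x hx
    simp only [mem_union, mem_image, mem_filter, mem_univ, true_and] at hx
    rcases hx with ⟨u, ⟨hu, -⟩, rfl⟩ | ⟨u, ⟨-, hu⟩, rfl⟩ <;> exact hu
  exact conductance_sdiff_le (semiDoubleCover E) hε1 hPS hεsimple hhalf hS'

/-- Let `G` be a finite digraph (edge relation `E`) with semi-double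
cover `H`. Let `ε ∈ [0,1)`, let `S ⊆ V_H` be ε-simple with `vol(S) ≤ vol(V_H)/2`,
let `P = {u₁, u₂ : u ∈ V_G, u₁ ∈ S and u₂ ∈ S}` and `S' = S ∖ P` with `vol(S') > 0`.
Then `Φ_H(S') ≤ (1/(1-ε)) (Φ_H(S) + ε)`. -/
theorem statement14 (E : V → V → Prop) (ε : ℝ) (hε0 : 0 ≤ ε) (hε1 : ε < 1)
    (S P : Finset (V ⊕ V))
    (hP : P = ((Finset.univ.filter fun u : V =>
                  Sum.inl u ∈ S ∧ Sum.inr u ∈ S).image Sum.inl)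
            ∪ ((Finset.univ.filter fun u : V =>
                  Sum.inl u ∈ S ∧ Sum.inr u ∈ S).image Sum.inr))
    (hεsimple : (vol (semiDoubleCover E) P : ℝ) ≤ ε * (vol (semiDoubleCover E) S : ℝ))
    (hhalf : 2 * vol (semiDoubleCover E) S ≤ vol (semiDoubleCover E) Finset.univ)
    (hS' : 0 < vol (semiDoubleCover E) (S \ P)) :
    conductance (semiDoubleCover E) (S \ P)
      ≤ (1 / (1 - ε)) * (conductance (semiDoubleCover E) S + ε) :=
  statement14_general E ε hε1 S P hP hεsimple hhalf hS'

end Paper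
end
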